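/- With notation as below, assume in addition 𝒥_n(2ω) ≠ 0, and for q ∈ ℂ define β_ρ = q·((t₃(ρ)·t₄'(ρ) − t₄(ρ)·t₃'(ρ))·ℋ_n(2ω) + t₄'(ρ)·𝒥_n(2ω))/(t₃(ρ)·ℋ_n(2ω) + 𝒥_n(2ω)). Then lim_{ρ→0⁺} (β_ρ·𝒥_n(kω) + q·ℋ_n(kω)) = q·(j_n(kω)·ℋ_n(kω) − h_n(kω)·𝒥_n(kω))/j_n(kω). -/

import Mathlib

/-!
As `t → 0⁺`, `j_n(t)` and `𝒥_n(t)` tend to `0`, while `t^{n+1} h_n(t)` and `t^{n+1} ℋ_n(t)`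
converge, the latter to `(-1)ⁿ i n c_n`, where `c_n = lim t^{2n+1} g_n(t)`; this is nonzero since
`n ≥ 1`. Multiplying the numerators and `D'_n(ρ)` by `(ωρ)^{n+1}` therefore gives
`t₃, t₄, t₃' → 0` and `t₄' → -h_n(kω)/j_n(kω)`, so `β_ρ → -q h_n(kω)/j_n(kω)`.

The behaviour at `0` comes from two regularisations of Rayleigh's recursion: `f_m` is the
restriction of an even entire function, built by iterating `dslope` (evenness makes `f_m'(0) = 0`,
so `f_m'(t)/t` is again a difference quotient at `0`), and `t^{2m+1} g_m(t)` extends to a smooth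
function, whose values `c_m` at `0` satisfy `c_0 = 1`, `c_{m+1} = -(2m+1) c_m`.
-/

open Filter Topology
open scoped Nat

/-- `sphf n` from Rayleigh's formula: `sphf 0 t = sin t / t`,
`sphf (m+1) t = (sphf m)'(t) / t`. -/
noncomputable def sphf : ℕ → ℝ → ℝ
  | 0 => fun t => Real.sin t / t
  | m + 1 => fun t => deriv (sphf m) t / t

/-- `sphg n` from Rayleigh's formula: `sphg 0 t = cos t / t`,
`sphg (m+1) t = (sphg m)'(t) / t`. -/
noncomputable def sphg : ℕ → ℝ → ℝ
  | 0 => fun t => Real.cos t / t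
  | m + 1 => fun t => deriv (sphg m) t / t

/-- The spherical Bessel function of the first kind, `j_n(t) = (-1)ⁿ tⁿ f_n(t)`. -/
noncomputable def sphj (n : ℕ) (t : ℝ) : ℝ := (-1) ^ n * t ^ n * sphf n t

/-- The spherical Bessel function of the second kind, `y_n(t) = -(-1)ⁿ tⁿ g_n(t)`. -/
noncomputable def sphy (n : ℕ) (t : ℝ) : ℝ := -((-1) ^ n * t ^ n * sphg n t)

/-- The spherical Hankel function of the first kind, `h_n(t) = j_n(t) + i y_n(t)`. -/
noncomputable def sphh (n : ℕ) (t : ℝ) : ℂ := (sphj n t : ℂ) + Complex.I * (sphy n t : ℂ)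

/-- `𝒥_n(t) = j_n(t) + t j_n'(t)`. -/
noncomputable def sphJ (n : ℕ) (t : ℝ) : ℝ := sphj n t + t * deriv (sphj n) t

/-- `ℋ_n(t) = h_n(t) + t h_n'(t)`. -/
noncomputable def sphH (n : ℕ) (t : ℝ) : ℂ := sphh n t + t * deriv (sphh n) t

/-- The determinant `D'_n(ρ) = ε₀^{-1/2} ρ h_n(ωρ) 𝒥_n(kω) - μ₀^{-1/2} k ℋ_n(ωρ) j_n(kω)`. -/
noncomputable def Dn' (ε₀ μ₀ ω k : ℝ) (n : ℕ) (ρ : ℝ) : ℂ :=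
  (Real.sqrt ε₀)⁻¹ * ρ * sphh n (ω * ρ) * sphJ n (k * ω)
    - (Real.sqrt μ₀)⁻¹ * k * sphH n (ω * ρ) * sphj n (k * ω)

/-- `t₃(ρ) = (μ₀^{-1/2} k 𝒥_n(ωρ) j_n(kω) - ε₀^{-1/2} ρ j_n(ωρ) 𝒥_n(kω)) / D'_n(ρ)`. -/
noncomputable def t3 (ε₀ μ₀ ω k : ℝ) (n : ℕ) (ρ : ℝ) : ℂ :=
  ((Real.sqrt μ₀)⁻¹ * k * sphJ n (ω * ρ) * sphj n (k * ω)
    - (Real.sqrt ε₀)⁻¹ * ρ * sphj n (ω * ρ) * sphJ n (k * ω)) / Dn' ε₀ μ₀ ω k n ρ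

/-- `t₄(ρ) = ρ (𝒥_n(ωρ) h_n(ωρ) - j_n(ωρ) ℋ_n(ωρ)) / D'_n(ρ)`. -/
noncomputable def t4 (ε₀ μ₀ ω k : ℝ) (n : ℕ) (ρ : ℝ) : ℂ :=
  (ρ * (sphJ n (ω * ρ) * sphh n (ω * ρ) - sphj n (ω * ρ) * sphH n (ω * ρ)))
    / Dn' ε₀ μ₀ ω k n ρ

/-- `t₃'(ρ) = (𝒥_n(kω) h_n(kω) - ℋ_n(kω) j_n(kω)) / D'_n(ρ)`. -/
noncomputable def t3' (ε₀ μ₀ ω k : ℝ) (n : ℕ) (ρ : ℝ) : ℂ :=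
  (sphJ n (k * ω) * sphh n (k * ω) - sphH n (k * ω) * sphj n (k * ω))
    / Dn' ε₀ μ₀ ω k n ρ

/-- `t₄'(ρ) = (μ₀^{-1/2} k h_n(kω) ℋ_n(ωρ) - ε₀^{-1/2} ρ ℋ_n(kω) h_n(ωρ)) / D'_n(ρ)`. -/
noncomputable def t4' (ε₀ μ₀ ω k : ℝ) (n : ℕ) (ρ : ℝ) : ℂ :=
  ((Real.sqrt μ₀)⁻¹ * k * sphh n (k * ω) * sphH n (ω * ρ)
    - (Real.sqrt ε₀)⁻¹ * ρ * sphH n (k * ω) * sphh n (ω * ρ)) / Dn' ε₀ μ₀ ω k n ρ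

theorem tendsto_div_of_tendsto_mul_left {α G₀ : Type*} [CommGroupWithZero G₀]
    [TopologicalSpace G₀] [ContinuousInv₀ G₀] [ContinuousMul G₀] {l : Filter α}
    {s f g : α → G₀} {a b : G₀} (hf : Tendsto (fun x => s x * f x) l (𝓝 a))
    (hg : Tendsto (fun x => s x * g x) l (𝓝 b)) (hb : b ≠ 0) (hs : ∀ᶠ x in l, s x ≠ 0) :
    Tendsto (fun x => f x / g x) l (𝓝 (a / b)) :=
  (hf.div hg hb).congr' <| hs.mono fun x hx => mul_div_mul_left (f x) (g x) hx

theorem tendsto_const_mul_nhdsGT_zero {c : ℝ} (hc : 0 < c) :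
    Tendsto (fun x : ℝ => c * x) (𝓝[>] 0) (𝓝[>] 0) :=
  tendsto_iff_comap.2 (comap_mulLeft_nhdsGT_zero hc).ge

namespace Function

variable {𝕜 E : Type*} [NontriviallyNormedField 𝕜] [NormedAddCommGroup E] [NormedSpace 𝕜 E]
  {f : 𝕜 → E}

theorem Even.deriv (hf : f.Even) : (deriv f).Odd := fun x => by
  simpa [funext hf] using deriv_comp_neg (f := f) (x := -x)

theorem Odd.dslope_zero [IsAddTorsionFree E] (hf : f.Odd) : (dslope f 0).Even := fun z => by
  rcases eq_or_ne z 0 with rfl | hz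
  · rw [neg_zero]
  · have h0 : f 0 = 0 := hf.map_zero
    rw [dslope_of_ne _ (neg_ne_zero.2 hz), dslope_of_ne _ hz, slope_def_module,
      slope_def_module, hf, h0]
    simp [inv_neg]

end Function

noncomputable def sphfExt : ℕ → ℂ → ℂ
  | 0 => dslope Complex.sin 0
  | m + 1 => dslope (deriv (sphfExt m)) 0

theorem differentiable_sphfExt (m : ℕ) : Differentiable ℂ (sphfExt m) := by
  rw [← differentiableOn_univ]
  induction m with
  | zero =>
    exact (Complex.differentiableOn_dslope (E := ℂ) univ_mem).2
      Complex.differentiable_sin.differentiableOn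
  | succ m ih =>
    rw [differentiableOn_univ] at ih
    exact (Complex.differentiableOn_dslope (E := ℂ) univ_mem).2
      ((contDiff_infty_iff_deriv.1 ih.contDiff).2.differentiable (by simp)).differentiableOn

theorem even_sphfExt : ∀ m, (sphfExt m).Even
  | 0 => Function.Odd.dslope_zero Complex.sin_neg
  | m + 1 => (even_sphfExt m).deriv.dslope_zero

theorem hasDerivAt_re_sphfExt (m : ℕ) (t : ℝ) :
    HasDerivAt (fun x : ℝ => (sphfExt m x).re) (deriv (sphfExt m) t).re t :=
  (differentiable_sphfExt m t).hasDerivAt.real_of_complex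

theorem sphf_eq_re_sphfExt (m : ℕ) {t : ℝ} (ht : t ≠ 0) : sphf m t = (sphfExt m t).re := by
  induction m generalizing t with
  | zero =>
    have htC : (t : ℂ) ≠ 0 := Complex.ofReal_ne_zero.2 ht
    rw [sphfExt, dslope_of_ne _ htC, slope_def_field, Complex.sin_zero, sub_zero, sub_zero,
      ← Complex.ofReal_sin, ← Complex.ofReal_div, Complex.ofReal_re]
    rfl
  | succ m ih =>
    have htC : (t : ℂ) ≠ 0 := Complex.ofReal_ne_zero.2 ht
    have hev : sphf m =ᶠ[𝓝 t] fun x : ℝ => (sphfExt m x).re :=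
      eventually_of_mem (isOpen_compl_singleton.mem_nhds ht) fun x hx => ih hx
    have hderiv : deriv (sphf m) t = (deriv (sphfExt m) t).re := by
      rw [hev.deriv_eq]; exact (hasDerivAt_re_sphfExt m t).deriv
    rw [sphfExt, dslope_of_ne _ htC, slope_def_field, (even_sphfExt m).deriv.map_zero,
      sub_zero, sub_zero, div_eq_inv_mul, ← Complex.ofReal_inv, Complex.re_ofReal_mul,
      ← hderiv, inv_mul_eq_div]
    rfl

theorem hasDerivAt_sphf (m : ℕ) {t : ℝ} (ht : t ≠ 0) :
    HasDerivAt (sphf m) (t * sphf (m + 1) t) t := by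
  have hev : (fun x : ℝ => (sphfExt m x).re) =ᶠ[𝓝 t] sphf m :=
    eventually_of_mem (isOpen_compl_singleton.mem_nhds ht) fun x hx =>
      (sphf_eq_re_sphfExt m hx).symm
  have hd := (hasDerivAt_re_sphfExt m t).differentiableAt.congr_of_eventuallyEq hev.symm
  rw [show t * sphf (m + 1) t = deriv (sphf m) t from mul_div_cancel₀ _ ht]
  exact hd.hasDerivAt

theorem tendsto_sphf_nhdsGT_zero (m : ℕ) :
    Tendsto (sphf m) (𝓝[>] 0) (𝓝 (sphfExt m 0).re) := by
  have hcont : Continuous fun x : ℝ => (sphfExt m x).re :=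
    Complex.continuous_re.comp ((differentiable_sphfExt m).continuous.comp
      Complex.continuous_ofReal)
  refine ((hcont.tendsto 0).mono_left nhdsWithin_le_nhds).congr' ?_
  filter_upwards [self_mem_nhdsWithin] with t (ht : (0 : ℝ) < t)
  simpa using (sphf_eq_re_sphfExt m ht.ne').symm

theorem tendsto_pow_mul_sphf (m : ℕ) {k : ℕ} (hk : k ≠ 0) :
    Tendsto (fun t : ℝ => t ^ k * sphf m t) (𝓝[>] 0) (𝓝 0) := by
  have hpow : Tendsto (fun t : ℝ => t ^ k) (𝓝[>] 0) (𝓝 0) :=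
    ((continuous_pow k).tendsto' 0 0 (zero_pow hk)).mono_left nhdsWithin_le_nhds
  simpa using hpow.mul (tendsto_sphf_nhdsGT_zero m)

noncomputable def sphgNum : ℕ → ℝ → ℝ
  | 0 => Real.cos
  | m + 1 => fun t => t * deriv (sphgNum m) t - (2 * m + 1) * sphgNum m t

open scoped ContDiff in
theorem contDiff_sphgNum : ∀ m, ContDiff ℝ ∞ (sphgNum m)
  | 0 => Real.contDiff_cos
  | m + 1 => (contDiff_id.mul (contDiff_infty_iff_deriv.1 (contDiff_sphgNum m)).2).sub
      (contDiff_const.mul (contDiff_sphgNum m))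

theorem sphg_eq_sphgNum_div (m : ℕ) {t : ℝ} (ht : t ≠ 0) :
    sphg m t = sphgNum m t / t ^ (2 * m + 1) := by
  induction m generalizing t with
  | zero => simp [sphg, sphgNum]
  | succ m ih =>
    have hev : sphg m =ᶠ[𝓝 t] fun x => sphgNum m x / x ^ (2 * m + 1) :=
      eventually_of_mem (isOpen_compl_singleton.mem_nhds ht) fun x hx => ih hx
    have hderiv : HasDerivAt (fun x => sphgNum m x / x ^ (2 * m + 1))
        ((deriv (sphgNum m) t * t ^ (2 * m + 1)
          - sphgNum m t * ((2 * m + 1 : ℕ) * t ^ (2 * m))) / (t ^ (2 * m + 1)) ^ 2) t :=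
      ((contDiff_sphgNum m).differentiable (by simp) t).hasDerivAt.div
        (by simpa using hasDerivAt_pow (2 * m + 1) t) (pow_ne_zero _ ht)
    show deriv (sphg m) t / t = _
    rw [hev.deriv_eq, hderiv.deriv, sphgNum]
    field_simp
    push_cast
    ring

theorem hasDerivAt_sphg (m : ℕ) {t : ℝ} (ht : t ≠ 0) :
    HasDerivAt (sphg m) (t * sphg (m + 1) t) t := by
  have hev : (fun x => sphgNum m x / x ^ (2 * m + 1)) =ᶠ[𝓝 t] sphg m :=
    eventually_of_mem (isOpen_compl_singleton.mem_nhds ht) fun x hx =>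
      (sphg_eq_sphgNum_div m hx).symm
  have hd := (((contDiff_sphgNum m).differentiable (by simp) t).div
    (differentiableAt_pow _) (pow_ne_zero _ ht)).congr_of_eventuallyEq hev.symm
  rw [show t * sphg (m + 1) t = deriv (sphg m) t from mul_div_cancel₀ _ ht]
  exact hd.hasDerivAt

theorem sphgNum_succ_zero (m : ℕ) : sphgNum (m + 1) 0 = -(2 * m + 1) * sphgNum m 0 := by
  simp only [sphgNum]
  ring

theorem sphgNum_zero_ne_zero : ∀ m, sphgNum m 0 ≠ 0
  | 0 => by simp [sphgNum]
  | m + 1 => by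
    rw [sphgNum_succ_zero]
    exact mul_ne_zero (by rw [neg_ne_zero]; positivity) (sphgNum_zero_ne_zero m)

theorem tendsto_pow_mul_sphg (m : ℕ) :
    Tendsto (fun t : ℝ => t ^ (2 * m + 1) * sphg m t) (𝓝[>] 0) (𝓝 (sphgNum m 0)) := by
  refine (((contDiff_sphgNum m).continuous.tendsto 0).mono_left nhdsWithin_le_nhds).congr' ?_
  filter_upwards [self_mem_nhdsWithin] with t (ht : (0 : ℝ) < t)
  rw [sphg_eq_sphgNum_div m ht.ne', mul_div_cancel₀ _ (pow_ne_zero _ ht.ne')]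

theorem add_smul_deriv_of_eq_pow_smul {E : Type*} [NormedAddCommGroup E] [NormedSpace ℝ E]
    {w u : ℝ → E} {u' : E} {n : ℕ} {t : ℝ} (hw : ∀ x, w x = x ^ n • u x)
    (hu : HasDerivAt u u' t) :
    w t + t • deriv w t = t ^ n • ((n + 1 : ℝ) • u t + t • u') := by
  have hpow : t * (n * t ^ (n - 1)) = n * t ^ n := by
    cases n with
    | zero => simp
    | succ n => rw [Nat.add_sub_cancel, pow_succ]; ring
  have hd : HasDerivAt (fun x => x ^ n • u x) (t ^ n • u' + (n * t ^ (n - 1)) • u t) t :=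
    (hasDerivAt_pow n t).smul hu
  rw [funext hw, hd.deriv, smul_add, smul_smul t (_ * _), hpow]
  module

theorem sphJ_eq (n : ℕ) {t : ℝ} (ht : t ≠ 0) :
    sphJ n t = (-1) ^ n * t ^ n * ((n + 1) * sphf n t + t ^ 2 * sphf (n + 1) t) := by
  have h := add_smul_deriv_of_eq_pow_smul (w := sphj n) (u := fun x => (-1) ^ n * sphf n x)
    (fun x => by rw [sphj, smul_eq_mul]; ring) ((hasDerivAt_sphf n ht).const_mul ((-1) ^ n))
  rw [sphJ, ← smul_eq_mul t, h]
  ring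

noncomputable def sphfg (m : ℕ) (t : ℝ) : ℂ := sphf m t - Complex.I * sphg m t

theorem hasDerivAt_sphfg (m : ℕ) {t : ℝ} (ht : t ≠ 0) :
    HasDerivAt (sphfg m) (t * sphfg (m + 1) t) t := by
  have h : HasDerivAt (fun x => (sphf m x : ℂ) - Complex.I * sphg m x)
      ((t * sphf (m + 1) t : ℝ) - Complex.I * (t * sphg (m + 1) t : ℝ)) t :=
    (hasDerivAt_sphf m ht).ofReal_comp.sub
      ((hasDerivAt_sphg m ht).ofReal_comp.const_mul Complex.I)
  exact h.congr_deriv (by simp only [sphfg]; push_cast; ring)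

theorem sphh_eq (n : ℕ) (t : ℝ) : sphh n t = (-1) ^ n * (t : ℂ) ^ n * sphfg n t := by
  simp only [sphh, sphj, sphy, sphfg]
  push_cast
  ring

theorem sphH_eq (n : ℕ) {t : ℝ} (ht : t ≠ 0) :
    sphH n t = (-1) ^ n * (t : ℂ) ^ n * ((n + 1) * sphfg n t + t ^ 2 * sphfg (n + 1) t) := by
  have h := add_smul_deriv_of_eq_pow_smul (w := sphh n) (u := fun x => (-1) ^ n * sphfg n x)
    (fun x => by rw [sphh_eq, Complex.real_smul]; push_cast; ring)
    ((hasDerivAt_sphfg n ht).const_mul ((-1) ^ n))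
  simp only [Complex.real_smul] at h
  rw [sphH, h]
  push_cast
  ring

theorem tendsto_sphj_nhdsGT_zero {n : ℕ} (hn : n ≠ 0) :
    Tendsto (sphj n) (𝓝[>] 0) (𝓝 0) := by
  simpa using ((tendsto_pow_mul_sphf n hn).const_mul ((-1) ^ n)).congr fun t => by
    rw [sphj, mul_assoc]

theorem tendsto_sphJ_nhdsGT_zero {n : ℕ} (hn : n ≠ 0) :
    Tendsto (sphJ n) (𝓝[>] 0) (𝓝 0) := by
  have h := (((tendsto_pow_mul_sphf n hn).const_mul ((n : ℝ) + 1)).add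
    (tendsto_pow_mul_sphf (n + 1) (k := n + 2) (by omega))).const_mul ((-1 : ℝ) ^ n)
  simp only [mul_zero, add_zero] at h
  refine h.congr' ?_
  filter_upwards [self_mem_nhdsWithin] with t (ht : (0 : ℝ) < t)
  rw [sphJ_eq n ht.ne']
  ring

theorem tendsto_pow_mul_sphfg (m : ℕ) :
    Tendsto (fun t : ℝ => (t : ℂ) ^ (2 * m + 1) * sphfg m t) (𝓝[>] 0)
      (𝓝 (-Complex.I * sphgNum m 0)) := by
  have hf := (tendsto_pow_mul_sphf m (k := 2 * m + 1) (by omega)).ofReal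
  have hg := (tendsto_pow_mul_sphg m).ofReal
  convert hf.sub (hg.const_mul Complex.I) using 1
  · ext t
    simp only [sphfg]
    push_cast
    ring
  · simp

theorem tendsto_pow_mul_sphh (n : ℕ) :
    Tendsto (fun t : ℝ => (t : ℂ) ^ (n + 1) * sphh n t) (𝓝[>] 0)
      (𝓝 ((-1) ^ n * (-Complex.I * sphgNum n 0))) :=
  ((tendsto_pow_mul_sphfg n).const_mul ((-1) ^ n)).congr fun t => by
    rw [sphh_eq]
    ring

noncomputable def sphHLead (n : ℕ) : ℂ := (-1) ^ n * Complex.I * n * sphgNum n 0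

theorem sphHLead_ne_zero {n : ℕ} (hn : n ≠ 0) : sphHLead n ≠ 0 := by
  simp [sphHLead, hn, sphgNum_zero_ne_zero]

theorem tendsto_pow_mul_sphH (n : ℕ) :
    Tendsto (fun t : ℝ => (t : ℂ) ^ (n + 1) * sphH n t) (𝓝[>] 0)
      (𝓝 (sphHLead n)) := by
  have h := (((tendsto_pow_mul_sphfg n).const_mul ((n : ℂ) + 1)).add
    (tendsto_pow_mul_sphfg (n + 1))).const_mul ((-1 : ℂ) ^ n)
  rw [sphgNum_succ_zero] at h
  convert h.congr' ?_ using 2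
  · rw [sphHLead]
    push_cast
    ring
  filter_upwards [self_mem_nhdsWithin] with t (ht : (0 : ℝ) < t)
  rw [sphH_eq n ht.ne']
  ring

section Interface

variable {ε₀ μ₀ ω k : ℝ} {n : ℕ}

theorem tendsto_ofReal_nhdsGT_zero : Tendsto (fun ρ : ℝ => (ρ : ℂ)) (𝓝[>] 0) (𝓝 0) :=
  (Complex.continuous_ofReal.tendsto' 0 0 Complex.ofReal_zero).mono_left nhdsWithin_le_nhds

theorem tendsto_ofReal_mul_nhdsGT_zero (hω : 0 < ω) :
    Tendsto (fun ρ : ℝ => ((ω * ρ : ℝ) : ℂ)) (𝓝[>] 0) (𝓝 0) := by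
  simpa using ((tendsto_const_mul_nhdsGT_zero hω).mono_right nhdsWithin_le_nhds).ofReal

theorem eventually_ofReal_mul_pow_ne_zero (hω : 0 < ω) :
    ∀ᶠ ρ : ℝ in 𝓝[>] 0, ((ω * ρ : ℝ) : ℂ) ^ (n + 1) ≠ 0 := by
  filter_upwards [self_mem_nhdsWithin] with ρ (hρ : (0 : ℝ) < ρ)
  exact pow_ne_zero _ (Complex.ofReal_ne_zero.2 (mul_pos hω hρ).ne')

noncomputable def Dn'Lead (μ₀ ω k : ℝ) (n : ℕ) : ℂ :=
  -((Real.sqrt μ₀)⁻¹ * k * sphHLead n * sphj n (k * ω))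

theorem Dn'Lead_ne_zero (hμ : 0 < μ₀) (hk : k ≠ 0) (hn : n ≠ 0) (hj : sphj n (k * ω) ≠ 0) :
    Dn'Lead μ₀ ω k n ≠ 0 := by
  have hμ' : Real.sqrt μ₀ ≠ 0 := (Real.sqrt_pos.2 hμ).ne'
  simp [Dn'Lead, hμ', hk, sphHLead_ne_zero hn, hj]

theorem tendsto_pow_mul_Dn' (hω : 0 < ω) :
    Tendsto (fun ρ : ℝ => ((ω * ρ : ℝ) : ℂ) ^ (n + 1) * Dn' ε₀ μ₀ ω k n ρ) (𝓝[>] 0)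
      (𝓝 (Dn'Lead μ₀ ω k n)) := by
  have hh := (tendsto_pow_mul_sphh n).comp (tendsto_const_mul_nhdsGT_zero hω)
  have hH := (tendsto_pow_mul_sphH n).comp (tendsto_const_mul_nhdsGT_zero hω)
  have h := (((tendsto_ofReal_nhdsGT_zero.const_mul (((Real.sqrt ε₀)⁻¹ : ℝ) : ℂ)).mul hh).mul_const
    (sphJ n (k * ω) : ℂ)).sub
      ((hH.const_mul ((((Real.sqrt μ₀)⁻¹ : ℝ) : ℂ) * k)).mul_const (sphj n (k * ω) : ℂ))
  convert h using 2
  · simp only [Dn', Function.comp_apply]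
    ring
  · simp [Dn'Lead]

theorem tendsto_div_Dn' (hω : 0 < ω) (hD : Dn'Lead μ₀ ω k n ≠ 0) {N : ℝ → ℂ} {a : ℂ}
    (hN : Tendsto (fun ρ : ℝ => ((ω * ρ : ℝ) : ℂ) ^ (n + 1) * N ρ) (𝓝[>] 0) (𝓝 a)) :
    Tendsto (fun ρ => N ρ / Dn' ε₀ μ₀ ω k n ρ) (𝓝[>] 0) (𝓝 (a / Dn'Lead μ₀ ω k n)) :=
  tendsto_div_of_tendsto_mul_left hN (tendsto_pow_mul_Dn' hω) hD
    (eventually_ofReal_mul_pow_ne_zero hω)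

theorem tendsto_t3 (hω : 0 < ω) (hn : n ≠ 0) (hD : Dn'Lead μ₀ ω k n ≠ 0) :
    Tendsto (t3 ε₀ μ₀ ω k n) (𝓝[>] 0) (𝓝 0) := by
  rw [← zero_div (Dn'Lead μ₀ ω k n)]
  apply tendsto_div_Dn' hω hD
  have hj := ((tendsto_sphj_nhdsGT_zero hn).comp (tendsto_const_mul_nhdsGT_zero hω)).ofReal
  have hJ := ((tendsto_sphJ_nhdsGT_zero hn).comp (tendsto_const_mul_nhdsGT_zero hω)).ofReal
  have h := ((tendsto_ofReal_mul_nhdsGT_zero hω).pow (n + 1)).mul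
    (((hJ.const_mul ((((Real.sqrt μ₀)⁻¹ : ℝ) : ℂ) * k)).mul_const (sphj n (k * ω) : ℂ)).sub
      (((tendsto_ofReal_nhdsGT_zero.const_mul (((Real.sqrt ε₀)⁻¹ : ℝ) : ℂ)).mul hj).mul_const
        (sphJ n (k * ω) : ℂ)))
  convert h using 2 <;> simp

theorem tendsto_t4 (hω : 0 < ω) (hn : n ≠ 0) (hD : Dn'Lead μ₀ ω k n ≠ 0) :
    Tendsto (t4 ε₀ μ₀ ω k n) (𝓝[>] 0) (𝓝 0) := by
  rw [← zero_div (Dn'Lead μ₀ ω k n)]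
  apply tendsto_div_Dn' hω hD
  have hj := ((tendsto_sphj_nhdsGT_zero hn).comp (tendsto_const_mul_nhdsGT_zero hω)).ofReal
  have hJ := ((tendsto_sphJ_nhdsGT_zero hn).comp (tendsto_const_mul_nhdsGT_zero hω)).ofReal
  have hh := (tendsto_pow_mul_sphh n).comp (tendsto_const_mul_nhdsGT_zero hω)
  have hH := (tendsto_pow_mul_sphH n).comp (tendsto_const_mul_nhdsGT_zero hω)
  have h := tendsto_ofReal_nhdsGT_zero.mul ((hJ.mul hh).sub (hj.mul hH))
  convert h using 2
  · simp only [Function.comp_apply]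
    push_cast
    ring
  · simp

theorem tendsto_t3' (hω : 0 < ω) (hD : Dn'Lead μ₀ ω k n ≠ 0) :
    Tendsto (t3' ε₀ μ₀ ω k n) (𝓝[>] 0) (𝓝 0) := by
  rw [← zero_div (Dn'Lead μ₀ ω k n)]
  apply tendsto_div_Dn' hω hD
  simpa using ((tendsto_ofReal_mul_nhdsGT_zero hω).pow (n + 1)).mul_const
    (sphJ n (k * ω) * sphh n (k * ω) - sphH n (k * ω) * sphj n (k * ω))

theorem tendsto_t4' (hω : 0 < ω) (hD : Dn'Lead μ₀ ω k n ≠ 0) :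
    Tendsto (t4' ε₀ μ₀ ω k n) (𝓝[>] 0) (𝓝 (-(sphh n (k * ω) / sphj n (k * ω)))) := by
  have hlim : -(sphh n (k * ω) / sphj n (k * ω)) =
      (Real.sqrt μ₀)⁻¹ * k * sphh n (k * ω) * sphHLead n / Dn'Lead μ₀ ω k n := by
    have hj : (sphj n (k * ω) : ℂ) ≠ 0 := right_ne_zero_of_mul (neg_ne_zero.1 hD)
    rw [eq_div_iff hD, Dn'Lead]
    field_simp
  rw [hlim]
  apply tendsto_div_Dn' hω hD
  have hh := (tendsto_pow_mul_sphh n).comp (tendsto_const_mul_nhdsGT_zero hω)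
  have hH := (tendsto_pow_mul_sphH n).comp (tendsto_const_mul_nhdsGT_zero hω)
  have h := (hH.const_mul ((((Real.sqrt μ₀)⁻¹ : ℝ) : ℂ) * k * sphh n (k * ω))).sub
    (((tendsto_ofReal_nhdsGT_zero.const_mul (((Real.sqrt ε₀)⁻¹ : ℝ) : ℂ)).mul_const
      (sphH n (k * ω))).mul hh)
  convert h using 2
  · simp only [Function.comp_apply]
    ring
  · simp

end Interface

/-- The `n`-th coefficient of the tangential trace at the cloaking interface,
`β_ρ 𝒥_n(kω) + q ℋ_n(kω)`, converges as `ρ → 0⁺` to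
`q (j_n(kω) ℋ_n(kω) - h_n(kω) 𝒥_n(kω))/j_n(kω)`, which is in general nonzero. -/
theorem tangential_trace_limit (ε₀ μ₀ ω : ℝ)
    (hε : 0 < ε₀) (hμ : 0 < μ₀) (hω : 0 < ω)
    (k : ℝ) (hk : k = Real.sqrt (μ₀ * ε₀)) (n : ℕ) (hn : 1 ≤ n)
    (hj : sphj n (k * ω) ≠ 0) (hJ2 : sphJ n (2 * ω) ≠ 0) (q : ℂ) :
    Tendsto (fun ρ : ℝ =>
        (q * ((t3 ε₀ μ₀ ω k n ρ * t4' ε₀ μ₀ ω k n ρ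
              - t4 ε₀ μ₀ ω k n ρ * t3' ε₀ μ₀ ω k n ρ) * sphH n (2 * ω)
            + t4' ε₀ μ₀ ω k n ρ * sphJ n (2 * ω))
          / (t3 ε₀ μ₀ ω k n ρ * sphH n (2 * ω) + sphJ n (2 * ω))) * sphJ n (k * ω)
          + q * sphH n (k * ω))
      (𝓝[>] 0)
      (𝓝 (q * (sphj n (k * ω) * sphH n (k * ω) - sphh n (k * ω) * sphJ n (k * ω))
        / sphj n (k * ω))) := by
  have hk0 : k ≠ 0 := by
    rw [hk]
    exact (Real.sqrt_pos.2 (mul_pos hμ hε)).ne'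
  have hn0 : n ≠ 0 := Nat.one_le_iff_ne_zero.1 hn
  have hD := Dn'Lead_ne_zero hμ hk0 hn0 hj
  have h3 := tendsto_t3 (ε₀ := ε₀) hω hn0 hD
  have h4 := tendsto_t4 (ε₀ := ε₀) hω hn0 hD
  have h3' := tendsto_t3' (ε₀ := ε₀) hω hD
  have h4' := tendsto_t4' (ε₀ := ε₀) hω hD
  have hJ2' : (sphJ n (2 * ω) : ℂ) ≠ 0 := Complex.ofReal_ne_zero.2 hJ2
  have hβ := ((((h3.mul h4').sub (h4.mul h3')).mul_const (sphH n (2 * ω))).add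
    (h4'.mul_const (sphJ n (2 * ω) : ℂ))).const_mul q |>.div
      ((h3.mul_const (sphH n (2 * ω))).add_const (sphJ n (2 * ω) : ℂ)) (by simpa using hJ2')
  convert (hβ.mul_const (sphJ n (k * ω) : ℂ)).add_const (q * sphH n (k * ω)) using 2
  · rfl
  · have hj' : (sphj n (k * ω) : ℂ) ≠ 0 := Complex.ofReal_ne_zero.2 hj
    simp only [zero_mul, mul_zero, sub_zero, zero_add]
    rw [mul_div_assoc _ (_ * _), mul_div_cancel_right₀ _ hJ2']
    field_simp
    ring
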